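/- The quartic form H(x₁,…,x₅) = h(x₁²,…,x₅²), where h(y₁,…,y₅) = (y₁+⋯+y₅)² − 4(y₁y₂ + y₂y₃ + y₃y₄ + y₄y₅ + y₅y₁) is the Horn form, is nonnegative on ℝ⁵. -/

import Mathlib

/-!
On the nonnegative orthant the Horn form is a square plus terms that are nonnegative as soon as
`y₄ ≤ y₅`. The Horn form is invariant under the reflection of the pentagon `1-2-3-4-5` that swaps
`y₄` and `y₅`, which reduces the case `y₅ ≤ y₄` to the first one. Substituting `yᵢ = xᵢ²` gives
the nonnegativity of the quartic.
-/

def hornForm (y₁ y₂ y₃ y₄ y₅ : ℝ) : ℝ :=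
  (y₁ + y₂ + y₃ + y₄ + y₅) ^ 2 - 4 * (y₁ * y₂ + y₂ * y₃ + y₃ * y₄ + y₄ * y₅ + y₅ * y₁)

theorem hornForm_eq_sq_add (y₁ y₂ y₃ y₄ y₅ : ℝ) :
    hornForm y₁ y₂ y₃ y₄ y₅ = (y₁ - y₂ + y₃ + y₄ - y₅) ^ 2 + 4 * y₂ * y₄ + 4 * y₃ * (y₅ - y₄) := by
  unfold hornForm
  ring

theorem hornForm_reflect (y₁ y₂ y₃ y₄ y₅ : ℝ) :
    hornForm y₃ y₂ y₁ y₅ y₄ = hornForm y₁ y₂ y₃ y₄ y₅ := by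
  unfold hornForm
  ring

theorem hornForm_nonneg_of_le {y₂ y₃ y₄ y₅ : ℝ} (y₁ : ℝ) (hy₂ : 0 ≤ y₂) (hy₃ : 0 ≤ y₃)
    (hy₄ : 0 ≤ y₄) (h : y₄ ≤ y₅) : 0 ≤ hornForm y₁ y₂ y₃ y₄ y₅ := by
  rw [hornForm_eq_sq_add]
  have := mul_nonneg hy₂ hy₄
  have := mul_nonneg hy₃ (sub_nonneg.2 h)
  linarith [sq_nonneg (y₁ - y₂ + y₃ + y₄ - y₅)]

theorem hornForm_nonneg {y₁ y₂ y₃ y₄ y₅ : ℝ} (hy₁ : 0 ≤ y₁) (hy₂ : 0 ≤ y₂) (hy₃ : 0 ≤ y₃)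
    (hy₄ : 0 ≤ y₄) (hy₅ : 0 ≤ y₅) : 0 ≤ hornForm y₁ y₂ y₃ y₄ y₅ := by
  rcases le_total y₄ y₅ with h | h
  · exact hornForm_nonneg_of_le y₁ hy₂ hy₃ hy₄ h
  · rw [← hornForm_reflect]
    exact hornForm_nonneg_of_le y₃ hy₂ hy₁ hy₅ h

theorem stmt3 (x₁ x₂ x₃ x₄ x₅ : ℝ) :
    0 ≤ (x₁ ^ 2 + x₂ ^ 2 + x₃ ^ 2 + x₄ ^ 2 + x₅ ^ 2) ^ 2
        - 4 * (x₁ ^ 2 * x₂ ^ 2 + x₂ ^ 2 * x₃ ^ 2 + x₃ ^ 2 * x₄ ^ 2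
            + x₄ ^ 2 * x₅ ^ 2 + x₅ ^ 2 * x₁ ^ 2) :=
  hornForm_nonneg (sq_nonneg x₁) (sq_nonneg x₂) (sq_nonneg x₃) (sq_nonneg x₄) (sq_nonneg x₅)
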